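/- The set {y in Q[[q]][t] : L1~ y = 0} is a Q-vector subspace of Q[[q]][t] of dimension exactly 4. (The Picard-Fuchs equation has a 4-dimensional space of solutions I_0, I_1, I_2, I_3, reflecting maximal unipotent monodromy at q = 0.) -/

import Mathlib

open PowerSeries

/-- The operator `D = q * d/dq` on `ℚ[[q]]`. -/
noncomputable def Dop (f : ℚ⟦X⟧) : ℚ⟦X⟧ := X * derivative ℚ f

/-- Coefficient of `D^4` in the Picard-Fuchs operator. -/
noncomputable def A4 : ℚ⟦X⟧ := (1 - 289 * X - 57 * X ^ 2 + X ^ 3) * (1 - 3 * X) ^ 2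
/-- Coefficient of `D^3` in the Picard-Fuchs operator. -/
noncomputable def A3 : ℚ⟦X⟧ := 4 * X * (3 * X - 1) * (143 + 57 * X - 87 * X ^ 2 + 3 * X ^ 3)
/-- Coefficient of `D^2` in the Picard-Fuchs operator. -/
noncomputable def A2 : ℚ⟦X⟧ :=
  2 * X * (-212 - 473 * X + 725 * X ^ 2 - 435 * X ^ 3 + 27 * X ^ 4)
/-- Coefficient of `D^1` in the Picard-Fuchs operator. -/
noncomputable def A1 : ℚ⟦X⟧ :=
  2 * X * (-69 - 481 * X + 159 * X ^ 2 - 171 * X ^ 3 + 18 * X ^ 4)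
/-- Coefficient of `D^0` in the Picard-Fuchs operator. -/
noncomputable def A0 : ℚ⟦X⟧ := X * (-17 - 202 * X - 8 * X ^ 2 - 54 * X ^ 3 + 9 * X ^ 4)

/-- The Picard-Fuchs operator of Rødland's mirror family of the Pfaffian
Calabi-Yau 3-fold, acting on `ℚ[[q]]` (here `q` is `PowerSeries.X`). -/
noncomputable def L1 (f : ℚ⟦X⟧) : ℚ⟦X⟧ :=
  A4 * Dop^[4] f + A3 * Dop^[3] f + A2 * Dop^[2] f + A1 * Dop f + A0 * f

/-- The extension of `D` to the derivation on `ℚ[[q]][t]` with `D t = 1`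
(where `t` plays the role of `ln q`). -/
noncomputable def Dt (y : Polynomial ℚ⟦X⟧) : Polynomial ℚ⟦X⟧ :=
  Polynomial.derivative y + y.sum fun n a => Polynomial.C (Dop a) * Polynomial.X ^ n

/-- The Picard-Fuchs operator acting on `ℚ[[q]][t]`, with `D` replaced by its
extension `Dt`. -/
noncomputable def L1t (y : Polynomial ℚ⟦X⟧) : Polynomial ℚ⟦X⟧ :=
    Polynomial.C A4 * Dt^[4] y + Polynomial.C A3 * Dt^[3] y
  + Polynomial.C A2 * Dt^[2] y + Polynomial.C A1 * Dt y + Polynomial.C A0 * y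

/-!
Write `y = ∑ₙ qⁿ yₙ` with `yₙ ∈ ℚ[t]`. On `qⁿ ℚ[t]` the derivation `D~` acts as `∂/∂t + n`, so,
since the coefficient of `D~^r` has constant term `1` and the other coefficients vanish at
`q = 0`, the `qⁿ`-coefficient of `L y = 0` reads `∂ₜʳ y₀ = 0` for `n = 0` and
`(∂ₜ + n)ʳ yₙ = -(terms in y₀, …, yₙ₋₁)` for `n ≥ 1`. For `n ≠ 0` the operator `∂ₜ + n` preserves
degrees, hence is bijective on `ℚ[t]` and on each space of polynomials of degree `< N`. Thus a
solution is determined by `y₀`, any `y₀` of degree `< r` extends (all `yₙ` then have degree `< r`,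
so the series assemble to an element of `ℚ[[q]][t]`), and the solutions form a space isomorphic
to `ℚ[t]_{<r}`. For `L1~` we have `r = 4`.
-/

open scoped Polynomial
open Polynomial (degreeLT degreeLTEquiv mem_degreeLT)
open Finset

section ShiftDeriv

variable {K : Type*} [Field K]

noncomputable def shiftDeriv (c : K) : K[X] →ₗ[K] K[X] :=
  Polynomial.derivative + c • LinearMap.id

lemma shiftDeriv_apply (c : K) (p : K[X]) :
    shiftDeriv c p = Polynomial.derivative p + c • p := rfl

lemma shiftDeriv_zero : shiftDeriv (0 : K) = Polynomial.derivative := by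
  simp [shiftDeriv]

lemma coeff_shiftDeriv (c : K) (p : K[X]) (k : ℕ) :
    (shiftDeriv c p).coeff k = p.coeff (k + 1) * (k + 1) + c * p.coeff k := by
  simp [shiftDeriv_apply, Polynomial.coeff_derivative]

lemma degree_shiftDeriv {c : K} (hc : c ≠ 0) (p : K[X]) :
    (shiftDeriv c p).degree = p.degree := by
  rcases eq_or_ne p 0 with rfl | hp
  · simp
  have hcp : (c • p).degree = p.degree := by
    rw [Polynomial.smul_eq_C_mul, Polynomial.degree_C_mul hc]
  rw [shiftDeriv_apply, Polynomial.degree_add_eq_right_of_degree_lt] <;> rw [hcp]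
  exact Polynomial.degree_derivative_lt hp

lemma degree_iterate_shiftDeriv {c : K} (hc : c ≠ 0) (r : ℕ) (p : K[X]) :
    ((shiftDeriv c)^[r] p).degree = p.degree := by
  induction r with
  | zero => rfl
  | succ r ih => rw [Function.iterate_succ_apply', degree_shiftDeriv hc, ih]

lemma mapsTo_shiftDeriv_degreeLT (c : K) (N : ℕ) :
    Set.MapsTo (shiftDeriv c) (degreeLT K N) (degreeLT K N) := by
  intro p hp
  rw [SetLike.mem_coe, mem_degreeLT] at *
  rw [shiftDeriv_apply]
  exact (Polynomial.degree_add_le _ _).trans_lt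
    (max_lt (Polynomial.degree_derivative_le.trans_lt hp)
      ((Polynomial.degree_smul_le c p).trans_lt hp))

lemma shiftDeriv_injective {c : K} (hc : c ≠ 0) : Function.Injective (shiftDeriv c) := by
  rw [← LinearMap.ker_eq_bot, LinearMap.ker_eq_bot']
  intro p hp
  simpa [hp] using (degree_shiftDeriv hc p).symm

lemma shiftDeriv_surjective {c : K} (hc : c ≠ 0) : Function.Surjective (shiftDeriv c) := by
  intro p
  let f := (shiftDeriv c).restrict (mapsTo_shiftDeriv_degreeLT c (p.natDegree + 1))
  have hf : Function.Injective f := fun x y hxy =>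
    Subtype.ext (shiftDeriv_injective hc (congrArg Subtype.val hxy))
  obtain ⟨q, hq⟩ := LinearMap.injective_iff_surjective.mp hf
    ⟨p, mem_degreeLT.mpr
      (Polynomial.degree_le_natDegree.trans_lt (by exact_mod_cast Nat.lt_succ_self _))⟩
  exact ⟨q, congrArg Subtype.val hq⟩

lemma bijective_iterate_shiftDeriv {c : K} (hc : c ≠ 0) (r : ℕ) :
    Function.Bijective (shiftDeriv c)^[r] :=
  Function.Bijective.iterate ⟨shiftDeriv_injective hc, shiftDeriv_surjective hc⟩ r

noncomputable def iterateShiftDerivEquiv {c : K} (hc : c ≠ 0) (r : ℕ) : K[X] ≃ K[X] :=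
  Equiv.ofBijective _ (bijective_iterate_shiftDeriv hc r)

lemma iterate_shiftDeriv_iterateShiftDerivEquiv_symm {c : K} (hc : c ≠ 0) (r : ℕ) (p : K[X]) :
    (shiftDeriv c)^[r] ((iterateShiftDerivEquiv hc r).symm p) = p :=
  Equiv.ofBijective_apply_symm_apply _ _ p

lemma iterateShiftDerivEquiv_symm_mem_degreeLT {c : K} (hc : c ≠ 0) (r : ℕ) {N : ℕ}
    {p : K[X]} (hp : p ∈ degreeLT K N) : (iterateShiftDerivEquiv hc r).symm p ∈ degreeLT K N := by
  rw [mem_degreeLT, ← degree_iterate_shiftDeriv hc r,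
    iterate_shiftDeriv_iterateShiftDerivEquiv_symm]
  exact mem_degreeLT.mp hp

lemma iterate_derivative_eq_zero_iff [CharZero K] {r : ℕ} {p : K[X]} :
    Polynomial.derivative^[r] p = 0 ↔ p ∈ degreeLT K r := by
  refine ⟨fun h => ?_, fun h => Polynomial.iterate_derivative_eq_zero_of_degree_lt
    (mem_degreeLT.mp h)⟩
  rw [mem_degreeLT, Polynomial.degree_lt_iff_coeff_zero]
  intro m hm
  obtain ⟨j, rfl⟩ := Nat.exists_eq_add_of_le' hm
  have hj := congrArg (Polynomial.coeff · j) h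
  simp only [Polynomial.coeff_iterate_derivative, Polynomial.coeff_zero, nsmul_eq_mul] at hj
  exact (mul_eq_zero.mp hj).resolve_left (by simp [Nat.descFactorial_eq_zero_iff_lt])

end ShiftDeriv

section QCoeff

variable {R : Type*} [CommSemiring R]

noncomputable def qCoeff (n : ℕ) : R⟦X⟧[X] →ₗ[R] R[X] :=
  Polynomial.lsum fun k => (Polynomial.monomial k).comp (coeff n)

lemma coeff_qCoeff (n k : ℕ) (y : R⟦X⟧[X]) :
    (qCoeff n y).coeff k = coeff n (y.coeff k) := by
  simp only [qCoeff, Polynomial.lsum_apply, LinearMap.coe_comp, Function.comp_apply,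
    Polynomial.sum_def, Polynomial.finsetSum_coeff, Polynomial.coeff_monomial, sum_ite_eq',
    Polynomial.mem_support_iff, ne_eq, ite_eq_left_iff, not_not]
  intro h
  simp [h]

lemma ext_qCoeff {y z : R⟦X⟧[X]} (h : ∀ n, qCoeff n y = qCoeff n z) : y = z := by
  ext k n
  simpa [coeff_qCoeff] using congrArg (Polynomial.coeff · k) (h n)

lemma qCoeff_C_mul (n : ℕ) (a : R⟦X⟧) (y : R⟦X⟧[X]) :
    qCoeff n (Polynomial.C a * y) = ∑ p ∈ antidiagonal n, coeff p.1 a • qCoeff p.2 y := by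
  ext k
  simp [coeff_qCoeff, Polynomial.coeff_C_mul, coeff_mul, Polynomial.finsetSum_coeff]

noncomputable def ofQCoeffs (N : ℕ) (a : ℕ → R[X]) : R⟦X⟧[X] :=
  ∑ k ∈ range N, Polynomial.monomial k (PowerSeries.mk fun n => (a n).coeff k)

lemma qCoeff_ofQCoeffs {N : ℕ} {a : ℕ → R[X]} (ha : ∀ n, a n ∈ degreeLT R N) (n : ℕ) :
    qCoeff n (ofQCoeffs N a) = a n := by
  ext k
  simp only [ofQCoeffs, coeff_qCoeff, Polynomial.finsetSum_coeff, Polynomial.coeff_monomial,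
    map_sum, apply_ite (coeff n), map_zero, coeff_mk, Finset.sum_ite_eq', Finset.mem_range]
  split_ifs with hk
  · rfl
  · exact ((Polynomial.degree_lt_iff_coeff_zero _ _).mp (mem_degreeLT.mp (ha n)) k
      (not_lt.mp hk)).symm

end QCoeff

lemma coeff_Dop (n : ℕ) (f : ℚ⟦X⟧) : coeff n (Dop f) = n * coeff n f := by
  cases n with
  | zero => simp [Dop]
  | succ m =>
    rw [Dop, coeff_succ_X_mul, coeff_derivative]
    push_cast
    ring

lemma coeff_Dt (y : ℚ⟦X⟧[X]) (k : ℕ) :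
    (Dt y).coeff k = y.coeff (k + 1) * (k + 1) + Dop (y.coeff k) := by
  simp only [Dt, Polynomial.sum_def, Polynomial.coeff_add, Polynomial.coeff_derivative,
    Polynomial.finsetSum_coeff, Polynomial.coeff_C_mul_X_pow, sum_ite_eq,
    Polynomial.mem_support_iff, ne_eq, add_right_inj, ite_eq_left_iff, not_not]
  intro h
  simp [h, Dop]

lemma qCoeff_Dt (n : ℕ) (y : ℚ⟦X⟧[X]) :
    qCoeff n (Dt y) = shiftDeriv (n : ℚ) (qCoeff n y) := by
  ext k
  rw [coeff_qCoeff, coeff_Dt, coeff_shiftDeriv, map_add, coeff_Dop, coeff_qCoeff, coeff_qCoeff,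
    show ((k : ℚ⟦X⟧) + 1) = C ((k : ℚ) + 1) by simp, coeff_mul_C]

lemma qCoeff_iterate_Dt (n i : ℕ) (y : ℚ⟦X⟧[X]) :
    qCoeff n (Dt^[i] y) = (shiftDeriv (n : ℚ))^[i] (qCoeff n y) :=
  Function.Semiconj.iterate_right (qCoeff_Dt n) i y

lemma Dt_add (y z : ℚ⟦X⟧[X]) : Dt (y + z) = Dt y + Dt z := by
  ext1 k
  simp only [coeff_Dt, Polynomial.coeff_add, Dop, map_add]
  ring

noncomputable def Dtₗ : Module.End ℚ ℚ⟦X⟧[X] := (AddMonoidHom.mk' Dt Dt_add).toRatLinearMap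

lemma coe_Dtₗ : ⇑Dtₗ = Dt := rfl

section DiffOp

variable {r : ℕ} (A : Fin (r + 1) → ℚ⟦X⟧)

noncomputable def diffOp : Module.End ℚ ℚ⟦X⟧[X] :=
  ∑ i, LinearMap.mulLeft ℚ (Polynomial.C (A i)) ∘ₗ Dtₗ ^ (i : ℕ)

lemma diffOp_apply (y : ℚ⟦X⟧[X]) : diffOp A y = ∑ i, Polynomial.C (A i) * Dt^[i] y := by
  simp [diffOp, Module.End.coe_pow, coe_Dtₗ]

lemma qCoeff_diffOp (n : ℕ) (y : ℚ⟦X⟧[X]) :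
    qCoeff n (diffOp A y) = ∑ i, ∑ p ∈ antidiagonal n,
      coeff p.1 (A i) • (shiftDeriv (p.2 : ℚ))^[i] (qCoeff p.2 y) := by
  simp only [diffOp_apply, map_sum, qCoeff_C_mul, qCoeff_iterate_Dt]

noncomputable def lowerOrderTerms (a : ℕ → ℚ[X]) (n : ℕ) : ℚ[X] :=
  ∑ i, ∑ p ∈ antidiagonal n, coeff (p.1 + 1) (A i) • (shiftDeriv (p.2 : ℚ))^[i] (a p.2)

/-- The indicial operator of `diffOp A` at `q = 0` is `D^r`. -/
structure IsMUMAtZero : Prop where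
  constantCoeff_last : constantCoeff (A (Fin.last r)) = 1
  constantCoeff_castSucc : ∀ i : Fin r, constantCoeff (A i.castSucc) = 0

variable {A}

lemma lowerOrderTerms_congr {a b : ℕ → ℚ[X]} {n : ℕ} (h : ∀ j ≤ n, a j = b j) :
    lowerOrderTerms A a n = lowerOrderTerms A b n := by
  refine Finset.sum_congr rfl fun i _ => Finset.sum_congr rfl fun p hp => ?_
  rw [h p.2 (HasAntidiagonal.antidiagonal.snd_le hp)]

lemma lowerOrderTerms_zero (n : ℕ) : lowerOrderTerms A 0 n = 0 := by
  simp [lowerOrderTerms, iterate_map_zero]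

lemma lowerOrderTerms_mem_degreeLT {a : ℕ → ℚ[X]} {n N : ℕ}
    (ha : ∀ j ≤ n, a j ∈ degreeLT ℚ N) : lowerOrderTerms A a n ∈ degreeLT ℚ N :=
  Submodule.sum_mem _ fun i _ => Submodule.sum_mem _ fun p hp => Submodule.smul_mem _ _
    ((mapsTo_shiftDeriv_degreeLT _ N).iterate i (ha p.2 (HasAntidiagonal.antidiagonal.snd_le hp)))

lemma sum_coeff_zero_smul (hA : IsMUMAtZero A)
    (f : Fin (r + 1) → ℚ[X]) :
    ∑ i, coeff 0 (A i) • f i = f (Fin.last r) := by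
  simp [Fin.sum_univ_castSucc, hA.constantCoeff_last, hA.constantCoeff_castSucc]

lemma qCoeff_zero_diffOp (hA : IsMUMAtZero A)
    (y : ℚ⟦X⟧[X]) :
    qCoeff 0 (diffOp A y) = Polynomial.derivative^[r] (qCoeff 0 y) := by
  simp only [qCoeff_diffOp, Finset.Nat.antidiagonal_zero, Finset.sum_singleton, Nat.cast_zero,
    shiftDeriv_zero]
  exact sum_coeff_zero_smul hA (fun i => Polynomial.derivative^[i] (qCoeff 0 y))

lemma qCoeff_succ_diffOp (hA : IsMUMAtZero A)
    (n : ℕ) (y : ℚ⟦X⟧[X]) :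
    qCoeff (n + 1) (diffOp A y) =
      (shiftDeriv ((n + 1 : ℕ) : ℚ))^[r] (qCoeff (n + 1) y) +
        lowerOrderTerms A (qCoeff · y) n := by
  simp only [qCoeff_diffOp, Finset.Nat.sum_antidiagonal_succ, Finset.sum_add_distrib]
  rw [sum_coeff_zero_smul hA]
  rfl

lemma eq_zero_of_diffOp_eq_zero (hA : IsMUMAtZero A) {y : ℚ⟦X⟧[X]}
    (hy : diffOp A y = 0) (h0 : qCoeff 0 y = 0) : y = 0 := by
  suffices h : ∀ n, qCoeff n y = 0 from ext_qCoeff fun n => by rw [h n, map_zero]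
  intro n
  induction n using Nat.strong_induction_on with
  | _ n ih =>
    cases n with
    | zero => exact h0
    | succ n =>
      have hc : ((n + 1 : ℕ) : ℚ) ≠ 0 := Nat.cast_ne_zero.mpr n.succ_ne_zero
      have h := qCoeff_succ_diffOp hA n y
      rw [hy, map_zero, lowerOrderTerms_congr (b := 0) fun j hj => ih j (Nat.lt_succ_of_le hj),
        lowerOrderTerms_zero, add_zero, ← iterate_map_zero (shiftDeriv _) r] at h
      exact (bijective_iterate_shiftDeriv hc r).injective h.symm

-- The `if` only exposes `j < n + 1` to the termination check; see `frobeniusSeq_succ`.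
variable (A) in
noncomputable def frobeniusSeq (p : ℚ[X]) : ℕ → ℚ[X]
  | 0 => p
  | n + 1 => -(iterateShiftDerivEquiv (Nat.cast_ne_zero.mpr n.succ_ne_zero) r).symm
      (lowerOrderTerms A (fun j => if j < n + 1 then frobeniusSeq p j else 0) n)

lemma frobeniusSeq_succ (p : ℚ[X]) (n : ℕ) :
    frobeniusSeq A p (n + 1) =
      -(iterateShiftDerivEquiv (Nat.cast_ne_zero.mpr n.succ_ne_zero) r).symm
        (lowerOrderTerms A (frobeniusSeq A p) n) := by
  rw [frobeniusSeq, lowerOrderTerms_congr fun j hj => if_pos (Nat.lt_succ_of_le hj)]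

lemma frobeniusSeq_mem_degreeLT {N : ℕ} {p : ℚ[X]} (hp : p ∈ degreeLT ℚ N) (n : ℕ) :
    frobeniusSeq A p n ∈ degreeLT ℚ N := by
  induction n using Nat.strong_induction_on with
  | _ n ih =>
    cases n with
    | zero => rwa [frobeniusSeq]
    | succ n =>
      rw [frobeniusSeq_succ]
      exact neg_mem (iterateShiftDerivEquiv_symm_mem_degreeLT _ _
        (lowerOrderTerms_mem_degreeLT fun j hj => ih j (Nat.lt_succ_of_le hj)))

variable (A) in
noncomputable def frobeniusSolution (p : ℚ[X]) : ℚ⟦X⟧[X] := ofQCoeffs r (frobeniusSeq A p)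

lemma qCoeff_frobeniusSolution {p : ℚ[X]} (hp : p ∈ degreeLT ℚ r) (n : ℕ) :
    qCoeff n (frobeniusSolution A p) = frobeniusSeq A p n :=
  qCoeff_ofQCoeffs (frobeniusSeq_mem_degreeLT hp) n

lemma diffOp_frobeniusSolution (hA : IsMUMAtZero A) {p : ℚ[X]}
    (hp : p ∈ degreeLT ℚ r) : diffOp A (frobeniusSolution A p) = 0 := by
  refine ext_qCoeff fun n => ?_
  rw [map_zero]
  cases n with
  | zero =>
    rw [qCoeff_zero_diffOp hA, qCoeff_frobeniusSolution hp, frobeniusSeq,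
      iterate_derivative_eq_zero_iff.mpr hp]
  | succ n =>
    rw [qCoeff_succ_diffOp hA, qCoeff_frobeniusSolution hp, frobeniusSeq_succ,
      iterate_map_neg, iterate_shiftDeriv_iterateShiftDerivEquiv_symm]
    simp only [qCoeff_frobeniusSolution hp, neg_add_cancel]

lemma qCoeff_zero_mem_degreeLT (hA : IsMUMAtZero A) {y : ℚ⟦X⟧[X]}
    (hy : diffOp A y = 0) : qCoeff 0 y ∈ degreeLT ℚ r :=
  iterate_derivative_eq_zero_iff.mp (by rw [← qCoeff_zero_diffOp hA, hy, map_zero])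

noncomputable def kerDiffOpEquiv (hA : IsMUMAtZero A) :
    LinearMap.ker (diffOp A) ≃ₗ[ℚ] degreeLT ℚ r :=
  LinearEquiv.ofBijective
    ((qCoeff 0 ∘ₗ (LinearMap.ker (diffOp A)).subtype).codRestrict _ fun y =>
      qCoeff_zero_mem_degreeLT hA y.2)
    ⟨(injective_iff_map_eq_zero _).mpr fun y hy =>
      Subtype.ext (eq_zero_of_diffOp_eq_zero hA y.2 (congrArg Subtype.val hy)),
    fun p => ⟨⟨frobeniusSolution A p, diffOp_frobeniusSolution hA p.2⟩,
      Subtype.ext (by simp [qCoeff_frobeniusSolution p.2, frobeniusSeq])⟩⟩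

lemma rank_ker_diffOp (hA : IsMUMAtZero A) :
    Module.rank ℚ (LinearMap.ker (diffOp A)) = r := by
  rw [(kerDiffOpEquiv hA).rank_eq, (degreeLTEquiv ℚ r).rank_eq, rank_fin_fun]

end DiffOp

lemma L1t_eq_diffOp (y : ℚ⟦X⟧[X]) : L1t y = diffOp ![A0, A1, A2, A3, A4] y := by
  rw [L1t, diffOp_apply, Fin.sum_univ_five]
  change _ = Polynomial.C A0 * y + Polynomial.C A1 * Dt y + Polynomial.C A2 * Dt^[2] y
    + Polynomial.C A3 * Dt^[3] y + Polynomial.C A4 * Dt^[4] y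
  ring

/-- The solution set of the Picard-Fuchs equation in `ℚ[[q]][t]` is a `ℚ`-vector
subspace of dimension exactly `4`, reflecting maximal unipotent monodromy at `q = 0`. -/
theorem pfaffian_picardFuchs_solution_space_rank_four :
    ∃ V : Submodule ℚ (Polynomial ℚ⟦X⟧),
      (V : Set (Polynomial ℚ⟦X⟧)) = {y | L1t y = 0} ∧ Module.rank ℚ V = 4 := by
  have hA : IsMUMAtZero ![A0, A1, A2, A3, A4] := by
    refine ⟨by simp [A4], fun i => ?_⟩
    fin_cases i <;> simp [A0, A1, A2, A3]
  refine ⟨LinearMap.ker (diffOp ![A0, A1, A2, A3, A4]), ?_, ?_⟩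
  · ext y
    simp [L1t_eq_diffOp]
  · exact_mod_cast rank_ker_diffOp hA
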